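/- The matrix 𝒰₃ = K · diag(exp{2πiΛ₃}) · L is 2-unitary (𝒰₃, 𝒰₃^R and 𝒰₃^Γ are all unitary), and 6·𝒰₃ is a complex Hadamard matrix of order 36 all of whose entries are sixth roots of unity, i.e. 6·𝒰₃ belongs to the Butson class BH(36,6). -/

import Mathlib

open Matrix Complex BigOperators

noncomputable section

/-- Reshuffling: `X^R_{(j,k),(l,m)} = X_{(j,l),(k,m)}`. -/
def reshuffle {d : ℕ} (X : Matrix (Fin d × Fin d) (Fin d × Fin d) ℂ) :
    Matrix (Fin d × Fin d) (Fin d × Fin d) ℂ :=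
  fun p q => X (p.1, q.1) (p.2, q.2)

/-- Partial transpose: `X^Γ_{(j,k),(l,m)} = X_{(j,m),(l,k)}`. -/
def ptranspose {d : ℕ} (X : Matrix (Fin d × Fin d) (Fin d × Fin d) ℂ) :
    Matrix (Fin d × Fin d) (Fin d × Fin d) ℂ :=
  fun p q => X (p.1, q.2) (q.1, p.2)

def IsUnitary {n : Type*} [Fintype n] [DecidableEq n] (M : Matrix n n ℂ) : Prop :=
  M ∈ Matrix.unitaryGroup n ℂ

/-- Kronecker product with index convention `(V⊗W)_{(j,k),(l,m)} = V_{jl} W_{km}`. -/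
def kron {d : ℕ} (A B : Matrix (Fin d) (Fin d) ℂ) :
    Matrix (Fin d × Fin d) (Fin d × Fin d) ℂ :=
  fun p q => A p.1 q.1 * B p.2 q.2

/-- The unitary Fourier matrix of order six, `(F₆)_{jk} = ω^{jk}/√6` with `ω = exp(2πi/6)`. -/
def F6 : Matrix (Fin 6) (Fin 6) ℂ :=
  fun j k => Complex.exp (2 * (Real.pi : ℂ) * Complex.I * (j.val : ℂ) * (k.val : ℂ) / 6) /
    (Real.sqrt 6 : ℂ)

/-- The cyclic shift on ℂ⁶: `X|j⟩ = |j+1 mod 6⟩`. -/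
def Xshift : Matrix (Fin 6) (Fin 6) ℂ := fun j k => if j = k + 1 then 1 else 0

/-- The generalized CNOT permutation `P = Σ_j |j⟩⟨j| ⊗ X^j` of order 36. -/
def Pcnot : Matrix (Fin 6 × Fin 6) (Fin 6 × Fin 6) ℂ :=
  fun p q => if p.1 = q.1 then (Xshift ^ (p.1 : ℕ)) p.2 q.2 else 0

def Kmat : Matrix (Fin 6 × Fin 6) (Fin 6 × Fin 6) ℂ := kron F6 1 * Pcnot * kron F6 1

def Lmat : Matrix (Fin 6 × Fin 6) (Fin 6 × Fin 6) ℂ := kron F6 1 * Pcnot * kron F6ᴴ 1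

/-- Index of the pair `(j,k)` in the vector of length 36 (row-major order). -/
def idx (p : Fin 6 × Fin 6) : ℕ := 6 * p.1.val + p.2.val

def Λ₁ (p : Fin 6 × Fin 6) : ℝ :=
  ([0,1,0,1,3,3,3,3,1,5,2,4,2,1,3,1,2,3,1,1,2,0,3,5,5,3,2,3,2,5,4,4,1,5,5,1] :
    List ℝ).getD (idx p) 0 / 6

def Λ₂ (p : Fin 6 × Fin 6) : ℝ :=
  ([0,2,3,3,2,0,0,3,2,2,0,4,2,0,3,5,0,0,0,5,0,0,2,0,2,2,5,3,2,4,2,3,0,2,0,0] :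
    List ℝ).getD (idx p) 0 / 6

def Λ₃ (p : Fin 6 × Fin 6) : ℝ :=
  ([0,2,2,0,0,1,0,1,1,1,2,1,0,2,0,2,2,2,2,0,2,2,2,1,1,1,2,0,2,2,0,1,2,2,1,0] :
    List ℝ).getD (idx p) 0 / 3

/-- `𝒰_j = K · diag(exp{2πiΛ}) · L`. -/
def Umat (Λ : Fin 6 × Fin 6 → ℝ) : Matrix (Fin 6 × Fin 6) (Fin 6 × Fin 6) ℂ :=
  Kmat * Matrix.diagonal (fun p => Complex.exp (2 * (Real.pi : ℂ) * Complex.I * (Λ p : ℂ))) * Lmat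


def ω : ℂ := Complex.exp (2 * (Real.pi : ℂ) * Complex.I / 6)

lemma omega_pow_six : ω ^ 6 = 1 := by
  rw [ω, ← Complex.exp_nat_mul]
  rw [show (6 : ℕ) * (2 * (Real.pi : ℂ) * Complex.I / 6) = 2 * Real.pi * Complex.I by
    push_cast; ring]
  exact Complex.exp_two_pi_mul_I

lemma omega_pow_three : ω ^ 3 = -1 := by
  rw [ω, ← Complex.exp_nat_mul]
  rw [show (3 : ℕ) * (2 * (Real.pi : ℂ) * Complex.I / 6) = Real.pi * Complex.I by
    push_cast; ring]
  exact Complex.exp_pi_mul_I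

lemma omega_eq : ω = Complex.exp ((Real.pi / 3 : ℝ) * Complex.I) := by
  rw [ω]; congr 1; push_cast; ring

lemma omega_im_ne : ω.im ≠ 0 := by
  rw [omega_eq, Complex.exp_ofReal_mul_I_im, Real.sin_pi_div_three]; positivity

lemma omega_ne_neg_one : ω ≠ -1 := by
  intro h
  have : ω.im = 0 := by rw [h]; simp
  exact omega_im_ne this

lemma omega_sq : ω ^ 2 = ω - 1 := by
  have h : (ω + 1) * (ω ^ 2 - ω + 1) = 0 := by
    have h3 := omega_pow_three
    ring_nf
    linear_combination h3
  rcases mul_eq_zero.mp h with h1 | h2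
  · exact absurd (by linear_combination h1) omega_ne_neg_one
  · linear_combination h2

def rep (n : ℕ) : ℤ × ℤ :=
  match n % 6 with | 0 => (1,0) | 1 => (0,1) | 2 => (-1,1) | 3 => (-1,0) | 4 => (0,-1) | _ => (1,-1)

def val (z : ℤ × ℤ) : ℂ := (z.1 : ℂ) + (z.2 : ℂ) * ω

lemma omega_pow_mod (n : ℕ) : ω ^ n = ω ^ (n % 6) := by
  conv_lhs => rw [← Nat.div_add_mod n 6, pow_add, pow_mul, omega_pow_six, one_pow, one_mul]

lemma val_rep (n : ℕ) : val (rep n) = ω ^ n := by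
  rw [omega_pow_mod]
  have h : n % 6 = 0 ∨ n % 6 = 1 ∨ n % 6 = 2 ∨ n % 6 = 3 ∨ n % 6 = 4 ∨ n % 6 = 5 := by omega
  rcases h with h | h | h | h | h | h <;> rw [h] <;> simp only [rep, h, val] <;> push_cast
  · simp
  · simp
  · linear_combination -omega_sq
  · linear_combination -(ω+1)*omega_sq
  · linear_combination -(ω*(ω+1))*omega_sq
  · linear_combination -(ω^3+ω^2-1)*omega_sq

lemma val_add (z w : ℤ × ℤ) : val (z + w) = val z + val w := by
  simp only [val, Prod.fst_add, Prod.snd_add]; push_cast; ring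

def valHom : ℤ × ℤ →+ ℂ where
  toFun := val
  map_zero' := by simp [val]
  map_add' := val_add

lemma conj_omega : (starRingEnd ℂ) ω = ω ^ 5 := by
  have h1 : (starRingEnd ℂ) ω * ω = 1 := by
    rw [ω, ← Complex.exp_conj, ← Complex.exp_add]
    rw [show (starRingEnd ℂ) (2 * (Real.pi : ℂ) * Complex.I / 6) +
        2 * (Real.pi : ℂ) * Complex.I / 6 = 0 by
      simp only [map_div₀, _root_.map_mul, Complex.conj_I, Complex.conj_ofReal, map_ofNat]
      ring]
    exact Complex.exp_zero
  have h2 : ω ^ 5 * ω = 1 := by rw [← pow_succ]; exact omega_pow_six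
  have hω : ω ≠ 0 := by
    intro h; rw [h] at h2; simp at h2
  calc (starRingEnd ℂ) ω = (starRingEnd ℂ) ω * (ω * ω⁻¹) := by rw [mul_inv_cancel₀ hω, mul_one]
    _ = ω ^ 5 * (ω * ω⁻¹) := by rw [← mul_assoc, h1, ← mul_assoc, h2]
    _ = ω ^ 5 := by rw [mul_inv_cancel₀ hω, mul_one]

lemma conj_omega_pow (n : ℕ) : (starRingEnd ℂ) (ω ^ n) = ω ^ (5 * n) := by
  rw [map_pow, conj_omega, ← pow_mul]

lemma abs_omega : ‖ω‖ = 1 := by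
  rw [ω, Complex.norm_exp]
  norm_num [Complex.div_re]

lemma sqrt6_mul_self : (Real.sqrt 6 : ℂ) * (Real.sqrt 6 : ℂ) = 6 := by
  rw [← Complex.ofReal_mul, Real.mul_self_sqrt (by norm_num)]
  norm_num

lemma F6_apply (j k : Fin 6) : F6 j k = ω ^ (j.val * k.val) / (Real.sqrt 6 : ℂ) := by
  rw [F6, ω, ← Complex.exp_nat_mul]
  congr 2
  push_cast
  ring

open Fin.NatCast in
lemma Xshift_pow (n : ℕ) (j k : Fin 6) :
    (Xshift ^ n) j k = if j = k + (n : Fin 6) then 1 else 0 := by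
  induction n generalizing j k with
  | zero => simp [Matrix.one_apply]
  | succ n ih =>
    rw [pow_succ, Matrix.mul_apply]
    simp only [Xshift, mul_ite, mul_one, mul_zero, ih]
    rw [Finset.sum_ite_eq' Finset.univ (k + 1)]
    simp only [Finset.mem_univ, if_true]
    congr 1
    push_cast
    rw [add_assoc, add_comm (1 : Fin 6)]

open Fin.NatCast in
lemma Pcnot_apply (a b c d : Fin 6) :
    Pcnot (a, b) (c, d) = if a = c ∧ b = d + a then 1 else 0 := by
  rw [Pcnot]
  simp only [Xshift_pow, Fin.cast_val_eq_self]
  by_cases h : a = c <;> simp [h, and_comm]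

lemma KP_apply (a b c d : Fin 6) :
    (kron F6 1 * Pcnot) (a, b) (c, d) = F6 a c * if b = d + c then 1 else 0 := by
  rw [Matrix.mul_apply, Fintype.sum_prod_type]
  rw [Finset.sum_eq_single c (fun x _ hx => ?_) (fun h => absurd (Finset.mem_univ c) h)]
  · rw [Finset.sum_eq_single b (fun y _ hy => ?_) (fun h => absurd (Finset.mem_univ b) h)]
    · by_cases h : b = d + c <;> simp [kron, Matrix.one_apply, Pcnot_apply, h]
    · simp [kron, Matrix.one_apply, Pcnot_apply, Ne.symm hy]
  · apply Finset.sum_eq_zero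
    intro y _
    simp [kron, Pcnot_apply, hx]

open Fin.CommRing in
lemma Kmat_apply (a b c d : Fin 6) :
    Kmat (a, b) (c, d) = ω ^ (a.val * (b - d).val + (b - d).val * c.val) / 6 := by
  have hbd : ¬ b = d + (b - d) → False := fun h => h (by ring)
  rw [Kmat, Matrix.mul_apply, Fintype.sum_prod_type]
  rw [Finset.sum_eq_single (b - d) (fun x _ hx => ?_) (fun h => absurd (Finset.mem_univ _) h)]
  · rw [Finset.sum_eq_single d (fun y _ hy => ?_) (fun h => absurd (Finset.mem_univ _) h)]
    · rw [KP_apply]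
      have hb : b = d + (b - d) := by ring
      simp only [kron, Matrix.one_apply, ← hb, if_pos rfl, if_true, mul_one]
      rw [F6_apply, F6_apply, div_mul_div_comm, ← pow_add, sqrt6_mul_self]
    · simp [kron, Matrix.one_apply, hy]
  · apply Finset.sum_eq_zero
    intro y _
    rw [KP_apply]
    by_cases hyd : y = d
    · subst hyd
      have : ¬ b = y + x := fun h => hx (by rw [h]; ring)
      simp [this]
    · simp [kron, Matrix.one_apply, hyd]

open Fin.CommRing in
lemma Lmat_apply (a b c d : Fin 6) :
    Lmat (a, b) (c, d) = ω ^ (a.val * (b - d).val + 5 * (c.val * (b - d).val)) / 6 := by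
  rw [Lmat, Matrix.mul_apply, Fintype.sum_prod_type]
  rw [Finset.sum_eq_single (b - d) (fun x _ hx => ?_) (fun h => absurd (Finset.mem_univ _) h)]
  · rw [Finset.sum_eq_single d (fun y _ hy => ?_) (fun h => absurd (Finset.mem_univ _) h)]
    · rw [KP_apply]
      have hb : b = d + (b - d) := by ring
      simp only [kron, Matrix.conjTranspose_apply, Matrix.one_apply, ← hb, if_pos rfl, if_true,
        star_one, mul_one]
      rw [F6_apply, F6_apply]
      simp only [Complex.star_def]
      rw [show (starRingEnd ℂ) (ω ^ (c.val * (b - d).val) / (Real.sqrt 6 : ℂ)) =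
        ω ^ (5 * (c.val * (b - d).val)) / (Real.sqrt 6 : ℂ) by
          rw [map_div₀, conj_omega_pow, Complex.conj_ofReal]]
      rw [div_mul_div_comm, ← pow_add, sqrt6_mul_self]
    · simp [kron, Matrix.one_apply, hy]
  · apply Finset.sum_eq_zero
    intro y _
    rw [KP_apply]
    by_cases hyd : y = d
    · subst hyd
      have : ¬ b = y + x := fun h => hx (by rw [h]; ring)
      simp [this]
    · simp [kron, Matrix.one_apply, hyd]

def Tn : Fin 6 × Fin 6 → ℕ := fun p =>
  ([0,2,2,0,0,1,0,1,1,1,2,1,0,2,0,2,2,2,2,0,2,2,2,1,1,1,2,0,2,2,0,1,2,2,1,0] : List ℕ).getD (idx p) 0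

lemma Lam3_eq (p : Fin 6 × Fin 6) : Λ₃ p = (Tn p : ℝ) / 3 := by
  obtain ⟨i, j⟩ := p
  fin_cases i <;> fin_cases j <;> norm_num [Λ₃, Tn, idx]

lemma diag_eq (p : Fin 6 × Fin 6) :
    Complex.exp (2 * (Real.pi : ℂ) * Complex.I * ((Λ₃ p : ℝ) : ℂ)) = ω ^ (2 * Tn p) := by
  rw [Lam3_eq, ω, ← Complex.exp_nat_mul]
  congr 1
  push_cast
  ring

def G (p q r : Fin 6 × Fin 6) : ℕ :=
  p.1.val * (p.2 - r.2).val + (p.2 - r.2).val * r.1.val + 2 * Tn r +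
    r.1.val * (r.2 - q.2).val + 5 * (q.1.val * (r.2 - q.2).val)

lemma U_apply (p q : Fin 6 × Fin 6) :
    Umat Λ₃ p q = (∑ r : Fin 6 × Fin 6, ω ^ G p q r) / 36 := by
  obtain ⟨a, b⟩ := p
  obtain ⟨c, d⟩ := q
  rw [Umat, Matrix.mul_apply, Finset.sum_div]
  apply Finset.sum_congr rfl
  rintro ⟨e, f⟩ -
  rw [Matrix.mul_diagonal, Kmat_apply, Lmat_apply, diag_eq]
  rw [G]
  dsimp only
  rw [div_mul_eq_mul_div, div_mul_div_comm, ← pow_add, ← pow_add]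
  norm_num
  ring_nf

lemma val_sum {s : Finset (Fin 6 × Fin 6)} (f : (Fin 6 × Fin 6) → ℕ) :
    (∑ r ∈ s, ω ^ f r) = val (∑ r ∈ s, rep (f r)) := by
  rw [show val (∑ r ∈ s, rep (f r)) = valHom (∑ r ∈ s, rep (f r)) from rfl, map_sum]
  exact Finset.sum_congr rfl (fun r _ => (val_rep (f r)).symm)

def S (p q : Fin 6 × Fin 6) : ℤ × ℤ := ∑ r : Fin 6 × Fin 6, rep (G p q r)

def mul6 (z : ℤ × ℤ) : ℤ × ℤ := (6 * z.1, 6 * z.2)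

def Erow : ℕ → List ℕ
  | 0 => [4, 1, 0, 5, 4, 1, 1, 4, 5, 0, 1, 0, 0, 3, 2, 1, 0, 3, 5, 2, 3, 4, 5, 4, 0, 3, 2, 1, 0, 3, 1, 4, 5, 0, 1, 0]
  | 1 => [1, 4, 1, 0, 5, 4, 1, 2, 5, 0, 1, 2, 5, 2, 5, 4, 3, 2, 1, 2, 5, 0, 1, 2, 1, 4, 1, 0, 5, 4, 5, 0, 3, 4, 5, 0]
  | 2 => [4, 1, 4, 1, 0, 5, 3, 2, 3, 0, 1, 2, 4, 1, 4, 1, 0, 5, 5, 4, 5, 2, 3, 4, 2, 5, 2, 5, 4, 3, 5, 4, 5, 2, 3, 4]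
  | 3 => [5, 4, 1, 4, 1, 0, 3, 4, 3, 4, 1, 2, 1, 0, 3, 0, 3, 2, 1, 2, 1, 2, 5, 0, 1, 0, 3, 0, 3, 2, 3, 4, 3, 4, 1, 2]
  | 4 => [0, 5, 4, 1, 4, 1, 3, 4, 5, 4, 5, 2, 4, 3, 2, 5, 2, 5, 3, 4, 5, 4, 5, 2, 0, 5, 4, 1, 4, 1, 1, 2, 3, 2, 3, 0]
  | 5 => [1, 0, 5, 4, 1, 4, 3, 4, 5, 0, 5, 0, 1, 0, 5, 4, 1, 4, 5, 0, 1, 2, 1, 2, 5, 4, 3, 2, 5, 2, 5, 0, 1, 2, 1, 2]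
  | 6 => [1, 3, 3, 3, 3, 1, 0, 2, 0, 4, 2, 4, 5, 1, 1, 1, 1, 5, 0, 2, 0, 4, 2, 4, 1, 3, 3, 3, 3, 1, 4, 0, 4, 2, 0, 2]
  | 7 => [2, 2, 4, 4, 4, 4, 0, 2, 4, 2, 0, 4, 2, 2, 4, 4, 4, 4, 2, 4, 0, 4, 2, 0, 0, 0, 2, 2, 2, 2, 2, 4, 0, 4, 2, 0]
  | 8 => [5, 3, 3, 5, 5, 5, 0, 2, 4, 0, 4, 2, 1, 5, 5, 1, 1, 1, 4, 0, 2, 4, 2, 0, 1, 5, 5, 1, 1, 1, 0, 2, 4, 0, 4, 2]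
  | 9 => [0, 0, 4, 4, 0, 0, 4, 2, 4, 0, 2, 0, 4, 4, 2, 2, 4, 4, 4, 2, 4, 0, 2, 0, 0, 0, 4, 4, 0, 0, 2, 0, 2, 4, 0, 4]
  | 10 => [1, 1, 1, 5, 5, 1, 2, 0, 4, 0, 2, 4, 1, 1, 1, 5, 5, 1, 4, 2, 0, 2, 4, 0, 5, 5, 5, 3, 3, 5, 4, 2, 0, 2, 4, 0]
  | 11 => [2, 2, 2, 2, 0, 0, 0, 4, 2, 0, 2, 4, 4, 4, 4, 4, 2, 2, 4, 2, 0, 4, 0, 2, 4, 4, 4, 4, 2, 2, 0, 4, 2, 0, 2, 4]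
  | 12 => [0, 1, 4, 1, 4, 5, 5, 0, 5, 4, 3, 0, 0, 1, 4, 1, 4, 5, 1, 2, 1, 0, 5, 2, 4, 5, 2, 5, 2, 3, 1, 2, 1, 0, 5, 2]
  | 13 => [1, 2, 3, 0, 3, 0, 3, 2, 3, 2, 1, 0, 3, 4, 5, 2, 5, 2, 1, 0, 1, 0, 5, 4, 3, 4, 5, 2, 5, 2, 3, 2, 3, 2, 1, 0]
  | 14 => [2, 3, 4, 5, 2, 5, 3, 0, 5, 0, 5, 4, 0, 1, 2, 3, 0, 3, 3, 0, 5, 0, 5, 4, 2, 3, 4, 5, 2, 5, 1, 4, 3, 4, 3, 2]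
  | 15 => [1, 4, 5, 0, 1, 4, 1, 0, 3, 2, 3, 2, 1, 4, 5, 0, 1, 4, 3, 2, 5, 4, 5, 4, 5, 2, 3, 4, 5, 2, 3, 2, 5, 4, 5, 4]
  | 16 => [0, 3, 0, 1, 2, 3, 5, 4, 3, 0, 5, 0, 2, 5, 2, 3, 4, 5, 3, 2, 1, 4, 3, 4, 2, 5, 2, 3, 4, 5, 5, 4, 3, 0, 5, 0]
  | 17 => [5, 2, 5, 2, 3, 4, 3, 2, 1, 0, 3, 2, 3, 0, 3, 0, 1, 2, 3, 2, 1, 0, 3, 2, 5, 2, 5, 2, 3, 4, 1, 0, 5, 4, 1, 0]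
  | 18 => [5, 5, 3, 1, 5, 1, 0, 0, 2, 4, 0, 0, 1, 1, 5, 3, 1, 3, 4, 4, 0, 2, 4, 4, 1, 1, 5, 3, 1, 3, 0, 0, 2, 4, 0, 0]
  | 19 => [4, 2, 2, 0, 4, 2, 4, 4, 4, 0, 2, 4, 2, 0, 0, 4, 2, 0, 4, 4, 4, 0, 2, 4, 4, 2, 2, 0, 4, 2, 2, 2, 2, 4, 0, 2]
  | 20 => [5, 1, 5, 5, 3, 1, 2, 2, 2, 2, 4, 0, 5, 1, 5, 5, 3, 1, 4, 4, 4, 4, 0, 2, 3, 5, 3, 3, 1, 5, 4, 4, 4, 4, 0, 2]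
  | 21 => [4, 2, 4, 2, 2, 0, 4, 0, 0, 0, 0, 2, 0, 4, 0, 4, 4, 2, 2, 4, 4, 4, 4, 0, 0, 4, 0, 4, 4, 2, 4, 0, 0, 0, 0, 2]
  | 22 => [3, 1, 5, 1, 5, 5, 0, 2, 4, 4, 4, 4, 1, 5, 3, 5, 3, 3, 0, 2, 4, 4, 4, 4, 3, 1, 5, 1, 5, 5, 4, 0, 2, 2, 2, 2]
  | 23 => [2, 0, 4, 2, 4, 2, 2, 4, 0, 2, 2, 2, 2, 0, 4, 2, 4, 2, 4, 0, 2, 4, 4, 4, 0, 4, 2, 0, 2, 0, 4, 0, 2, 4, 4, 4]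
  | 24 => [0, 5, 0, 1, 2, 1, 1, 0, 3, 0, 3, 4, 4, 3, 4, 5, 0, 5, 1, 0, 3, 0, 3, 4, 0, 5, 0, 1, 2, 1, 5, 4, 1, 4, 1, 2]
  | 25 => [5, 4, 3, 4, 5, 0, 3, 0, 5, 2, 5, 2, 5, 4, 3, 4, 5, 0, 5, 2, 1, 4, 1, 4, 3, 2, 1, 2, 3, 4, 5, 2, 1, 4, 1, 4]
  | 26 => [4, 3, 2, 1, 2, 3, 1, 2, 5, 4, 1, 4, 0, 5, 4, 3, 4, 5, 5, 0, 3, 2, 5, 2, 0, 5, 4, 3, 4, 5, 1, 2, 5, 4, 1, 4]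
  | 27 => [1, 2, 1, 0, 5, 0, 3, 0, 1, 4, 3, 0, 5, 0, 5, 4, 3, 4, 3, 0, 1, 4, 3, 0, 1, 2, 1, 0, 5, 0, 1, 4, 5, 2, 1, 4]
  | 28 => [4, 5, 0, 5, 4, 3, 5, 2, 5, 0, 3, 2, 4, 5, 0, 5, 4, 3, 1, 4, 1, 2, 5, 4, 2, 3, 4, 3, 2, 1, 1, 4, 1, 2, 5, 4]
  | 29 => [1, 2, 3, 4, 3, 2, 1, 4, 1, 4, 5, 2, 3, 4, 5, 0, 5, 4, 5, 2, 5, 2, 3, 0, 3, 4, 5, 0, 5, 4, 1, 4, 1, 4, 5, 2]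
  | 30 => [1, 5, 1, 3, 5, 5, 4, 2, 2, 2, 2, 0, 1, 5, 1, 3, 5, 5, 0, 4, 4, 4, 4, 2, 5, 3, 5, 1, 3, 3, 0, 4, 4, 4, 4, 2]
  | 31 => [4, 0, 4, 0, 2, 4, 0, 4, 2, 2, 2, 2, 0, 2, 0, 2, 4, 0, 4, 2, 0, 0, 0, 0, 0, 2, 0, 2, 4, 0, 0, 4, 2, 2, 2, 2]
  | 32 => [3, 3, 5, 3, 5, 1, 2, 0, 4, 2, 2, 2, 1, 1, 3, 1, 3, 5, 2, 0, 4, 2, 2, 2, 3, 3, 5, 3, 5, 1, 0, 4, 2, 0, 0, 0]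
  | 33 => [0, 2, 2, 4, 2, 4, 2, 2, 0, 4, 2, 2, 0, 2, 2, 4, 2, 4, 4, 4, 2, 0, 4, 4, 4, 0, 0, 2, 0, 2, 4, 4, 2, 0, 4, 4]
  | 34 => [3, 5, 1, 1, 3, 1, 2, 2, 2, 0, 4, 2, 5, 1, 3, 3, 5, 3, 0, 0, 0, 4, 2, 0, 5, 1, 3, 3, 5, 3, 2, 2, 2, 0, 4, 2]
  | 35 => [0, 2, 4, 0, 0, 2, 2, 2, 2, 2, 0, 4, 4, 0, 2, 4, 4, 0, 2, 2, 2, 2, 0, 4, 0, 2, 4, 0, 0, 2, 0, 0, 0, 0, 4, 2]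
  | _ => []

def Etab (p q : Fin 6 × Fin 6) : ℕ := (Erow (idx p)).getD (idx q) 0

lemma U_val (p q : Fin 6 × Fin 6) : Umat Λ₃ p q = val (S p q) / 36 := by
  rw [U_apply, val_sum (G p q)]; rfl

set_option maxHeartbeats 16000000 in
set_option maxRecDepth 100000 in
lemma key1 : ∀ p q : Fin 6 × Fin 6, S p q = mul6 (rep (Etab p q)) := by decide

lemma sixU (p q : Fin 6 × Fin 6) : (6 : ℂ) * Umat Λ₃ p q = ω ^ Etab p q := by
  rw [U_val, key1, ← val_rep]
  have : val (mul6 (rep (Etab p q))) = 6 * val (rep (Etab p q)) := by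
    simp only [val, mul6]; push_cast; ring
  rw [this]
  ring

lemma U_entry (p q : Fin 6 × Fin 6) : Umat Λ₃ p q = ω ^ Etab p q / 6 := by
  rw [← sixU]; ring

lemma gram (Ex : (Fin 6 × Fin 6) → (Fin 6 × Fin 6) → ℕ)
    (M : Matrix (Fin 6 × Fin 6) (Fin 6 × Fin 6) ℂ)
    (hM : ∀ p q, M p q = ω ^ Ex p q / 6)
    (hkey : ∀ p q, (∑ r : Fin 6 × Fin 6, rep (Ex p r + 5 * Ex q r)) =
      if p = q then ((36:ℤ), 0) else 0) :
    M * Mᴴ = 1 := by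
  ext p q
  rw [Matrix.mul_apply]
  have hterm : ∀ r, M p r * (Mᴴ r q) = ω ^ (Ex p r + 5 * Ex q r) / 36 := by
    intro r
    rw [Matrix.conjTranspose_apply, hM, hM, Complex.star_def, map_div₀, conj_omega_pow, pow_add]
    have h6 : (starRingEnd ℂ) 6 = 6 := by
      rw [show ((6:ℂ)) = ((6:ℝ):ℂ) by norm_num, Complex.conj_ofReal]
    rw [h6]
    ring
  rw [Finset.sum_congr rfl (fun r _ => hterm r), ← Finset.sum_div, val_sum, hkey]
  by_cases hpq : p = q
  · subst hpq
    rw [if_pos rfl, Matrix.one_apply_eq]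
    simp only [val]
    norm_num
  · rw [if_neg hpq, Matrix.one_apply_ne hpq]
    simp only [val]
    norm_num

set_option maxHeartbeats 16000000 in
set_option maxRecDepth 100000 in
lemma key2U : ∀ p q : Fin 6 × Fin 6, (∑ r : Fin 6 × Fin 6, rep (Etab p r + 5 * Etab q r)) =
    if p = q then ((36:ℤ), 0) else 0 := by decide

set_option maxHeartbeats 16000000 in
set_option maxRecDepth 100000 in
lemma key2R : ∀ p q : Fin 6 × Fin 6,
    (∑ r : Fin 6 × Fin 6, rep (Etab (p.1, r.1) (p.2, r.2) + 5 * Etab (q.1, r.1) (q.2, r.2))) =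
    if p = q then ((36:ℤ), 0) else 0 := by decide

set_option maxHeartbeats 16000000 in
set_option maxRecDepth 100000 in
lemma key2P : ∀ p q : Fin 6 × Fin 6,
    (∑ r : Fin 6 × Fin 6, rep (Etab (p.1, r.2) (r.1, p.2) + 5 * Etab (q.1, r.2) (r.1, q.2))) =
    if p = q then ((36:ℤ), 0) else 0 := by decide

/-- The matrix `𝒰 = K · diag(exp{2πiΛ₃}) · L` is 2-unitary and `6·𝒰` is a
complex Hadamard matrix of order 36 whose entries are sixth roots of unity,
i.e. `6·𝒰 ∈ BH(36,6)`. -/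
theorem U3_two_unitary_and_butson :
    IsUnitary (Umat Λ₃) ∧
    IsUnitary (reshuffle (Umat Λ₃)) ∧
    IsUnitary (ptranspose (Umat Λ₃)) ∧
    (∀ p q, ‖(6 : ℂ) * Umat Λ₃ p q‖ = 1) ∧
    ((6 : ℂ) • Umat Λ₃) * ((6 : ℂ) • Umat Λ₃)ᴴ =
      (36 : ℂ) • (1 : Matrix (Fin 6 × Fin 6) (Fin 6 × Fin 6) ℂ) ∧
    (∀ p q, ((6 : ℂ) * Umat Λ₃ p q) ^ 6 = 1) := by
  have hU : Umat Λ₃ * (Umat Λ₃)ᴴ = 1 := gram Etab _ U_entry key2U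
  refine ⟨?_, ?_, ?_, ?_, ?_, ?_⟩
  · rw [IsUnitary, Matrix.mem_unitaryGroup_iff, Matrix.star_eq_conjTranspose]
    exact hU
  · rw [IsUnitary, Matrix.mem_unitaryGroup_iff, Matrix.star_eq_conjTranspose]
    exact gram (fun p q => Etab (p.1, q.1) (p.2, q.2)) _ (fun p q => U_entry _ _) key2R
  · rw [IsUnitary, Matrix.mem_unitaryGroup_iff, Matrix.star_eq_conjTranspose]
    exact gram (fun p q => Etab (p.1, q.2) (q.1, p.2)) _ (fun p q => U_entry _ _) key2P
  · intro p q
    rw [sixU, norm_pow, abs_omega, one_pow]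
  · have hstar : star (6 : ℂ) = 6 := by
      rw [show ((6:ℂ)) = ((6:ℝ):ℂ) by norm_num]
      exact Complex.conj_ofReal 6
    rw [Matrix.conjTranspose_smul, hstar, smul_mul_assoc, Matrix.mul_smul, hU, smul_smul]
    norm_num
  · intro p q
    rw [sixU, ← pow_mul, mul_comm, pow_mul, omega_pow_six, one_pow]
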